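/- (Hardy inequality, case sp = 1.) If sp = 1, then there exists a constant C'' > 0, depending only on Ω, N, p and s, such that ∫_Ω |u(x)|^p / ρ(x)^{sp} dx ≤ C'' ∫_{ℝ^N}∫_{ℝ^N} |u(x)−u(y)|^p/|x−y|^{N+sp} dx dy for every u ∈ W^{s,p}_0(Ω). -/

import Mathlib

open MeasureTheory ENNReal Filter Topology Set

noncomputable section

/-- Euclidean space `ℝ^N`. -/
abbrev Euc (N : ℕ) := EuclideanSpace ℝ (Fin N)

/-- `Ω` is a bounded Lipschitz domain: a bounded open connected set whose boundary is
locally the graph of a Lipschitz function (in suitable rotated coordinates). -/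
def IsLipschitzDomain {N : ℕ} (Ω : Set (Euc N)) : Prop :=
  IsOpen Ω ∧ IsConnected Ω ∧ Bornology.IsBounded Ω ∧
  ∀ x ∈ frontier Ω, ∃ U : Set (Euc N), IsOpen U ∧ x ∈ U ∧
    ∃ (e : Euc N ≃ᵢ WithLp 2 (EuclideanSpace ℝ (Fin (N - 1)) × ℝ))
      (φ : EuclideanSpace ℝ (Fin (N - 1)) → ℝ) (L : NNReal),
      LipschitzWith L φ ∧
      ∀ y ∈ U, (y ∈ Ω ↔ φ ((WithLp.equiv 2 _) (e y)).1 < ((WithLp.equiv 2 _) (e y)).2)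

/-- The `p`-th power of the Gagliardo seminorm, as an extended nonnegative real. -/
def gagliardoE (N : ℕ) (s p : ℝ) (u : Euc N → ℝ) : ℝ≥0∞ :=
  ∫⁻ x, ∫⁻ y, ENNReal.ofReal (|u x - u y| ^ p / dist x y ^ ((N : ℝ) + s * p))

/-- The Gagliardo seminorm `‖u‖`. -/
def gagliardoNorm (N : ℕ) (s p : ℝ) (u : Euc N → ℝ) : ℝ :=
  (gagliardoE N s p u).toReal ^ (1 / p)

/-- Membership in `W^{s,p}_0(Ω)`: `u ∈ L^p(ℝ^N)`, finite Gagliardo seminorm,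
and `u = 0` a.e. on `ℝ^N ∖ Ω`. -/
def MemW0 (N : ℕ) (s p : ℝ) (Ω : Set (Euc N)) (u : Euc N → ℝ) : Prop :=
  MemLp u (ENNReal.ofReal p) (volume : Measure (Euc N)) ∧
  gagliardoE N s p u ≠ ⊤ ∧
  ∀ᵐ x ∂(volume : Measure (Euc N)), x ∉ Ω → u x = 0

/-- The critical exponent `p*_s = Np/(N−sp)` if `sp < N`, and `∞` otherwise. -/
def pStar (N : ℕ) (s p : ℝ) : ℝ≥0∞ :=
  if s * p < N then ENNReal.ofReal (N * p / (N - s * p)) else ⊤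

/-- `ρ(x) = dist(x, ∂Ω)`. -/
def rho {N : ℕ} (Ω : Set (Euc N)) (x : Euc N) : ℝ :=
  Metric.infDist x (frontier Ω)

/-- The `L^r(Ω)` norm `|u|_r`. -/
def lpNorm {N : ℕ} (Ω : Set (Euc N)) (r : ℝ) (u : Euc N → ℝ) : ℝ :=
  (∫ x in Ω, |u x| ^ r) ^ (1 / r)

/-- The class `B_q` with explicit exponents `a ∈ [0, q−1]`, `r ∈ (1,∞)`:
`h·ρ^{sa} ∈ L^r(Ω)` and `1/r + a/p + (q−a)/p*_s < 1`. -/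
def MemBWith (N : ℕ) (s p : ℝ) (Ω : Set (Euc N)) (q a r : ℝ) (h : Euc N → ℝ) : Prop :=
  0 ≤ a ∧ a ≤ q - 1 ∧ 1 < r ∧
  ENNReal.ofReal (1 / r + a / p) + ENNReal.ofReal (q - a) / pStar N s p < 1 ∧
  MemLp (fun x => h x * rho Ω x ^ (s * a)) (ENNReal.ofReal r)
    ((volume : Measure (Euc N)).restrict Ω)

/-- The class `B_q`. -/
def MemB (N : ℕ) (s p : ℝ) (Ω : Set (Euc N)) (q : ℝ) (h : Euc N → ℝ) : Prop :=
  ∃ a r : ℝ, MemBWith N s p Ω q a r h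

/-- The class `A_q`: `h ∈ L^r(Ω)` for some `r ∈ (1,∞)` with `1/r + q/p*_s < 1`. -/
def MemA (N : ℕ) (s p : ℝ) (Ω : Set (Euc N)) (q : ℝ) (h : Euc N → ℝ) : Prop :=
  ∃ r : ℝ, 1 < r ∧
    ENNReal.ofReal (1 / r) + ENNReal.ofReal q / pStar N s p < 1 ∧
    MemLp h (ENNReal.ofReal r) ((volume : Measure (Euc N)).restrict Ω)

/-- The class `B̃_q` (for `sp ≤ N`): `K·ρ^{sa} ∈ L^r(Ω)` for some `a ∈ [0, q−1]`,
`r ∈ (1,∞)` with `1/r + a/p + (q−1−a)/p*_s < sp/N`. -/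
def MemBTilde (N : ℕ) (s p : ℝ) (Ω : Set (Euc N)) (q : ℝ) (K : Euc N → ℝ) : Prop :=
  ∃ a r : ℝ, 0 ≤ a ∧ a ≤ q - 1 ∧ 1 < r ∧
    ENNReal.ofReal (1 / r + a / p) + ENNReal.ofReal (q - 1 - a) / pStar N s p
      < ENNReal.ofReal (s * p / N) ∧
    MemLp (fun x => K x * rho Ω x ^ (s * a)) (ENNReal.ofReal r)
      ((volume : Measure (Euc N)).restrict Ω)

/-- The class `B_t^q`: `K·ρ^{sa} ∈ L^r(Ω)` for some `a ∈ [0, t−1]`, `r ∈ (1,∞)`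
with `1/r + a/p + (t−a)/q ≤ 1`. -/
def MemBtq (N : ℕ) (s p : ℝ) (Ω : Set (Euc N)) (q t : ℝ) (K : Euc N → ℝ) : Prop :=
  ∃ a r : ℝ, 0 ≤ a ∧ a ≤ t - 1 ∧ 1 < r ∧
    1 / r + a / p + (t - a) / q ≤ 1 ∧
    MemLp (fun x => K x * rho Ω x ^ (s * a)) (ENNReal.ofReal r)
      ((volume : Measure (Euc N)).restrict Ω)

/-- The pairing `⟨A(u), v⟩` associated with the fractional `p`-Laplacian. -/
def fracPairing (N : ℕ) (s p : ℝ) (u v : Euc N → ℝ) : ℝ :=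
  ∫ x, ∫ y, |u x - u y| ^ (p - 2) * (u x - u y) * (v x - v y) / dist x y ^ ((N : ℝ) + s * p)

/-- `u` is a weak solution of `(−Δ)_p^s u = f(x, u)` in `Ω`, `u = 0` in `ℝ^N ∖ Ω`. -/
def IsWeakSolution (N : ℕ) (s p : ℝ) (Ω : Set (Euc N)) (f : Euc N → ℝ → ℝ)
    (u : Euc N → ℝ) : Prop :=
  MemW0 N s p Ω u ∧
  ∀ v, MemW0 N s p Ω v → fracPairing N s p u v = ∫ x in Ω, f x (u x) * v x

/-- `f` is a Carathéodory function on `Ω × ℝ`. -/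
def Caratheodory {N : ℕ} (Ω : Set (Euc N)) (f : Euc N → ℝ → ℝ) : Prop :=
  (∀ t : ℝ, Measurable fun x => f x t) ∧
  ∀ᵐ x ∂((volume : Measure (Euc N)).restrict Ω), Continuous fun t => f x t

/-!
As `u` vanishes off `Ω`, the Gagliardo energy dominates
`∫_Ω |u x|^p ∫_{Ωᶜ} |x - y|^{-(N + sp)} dy dx`, so it suffices to bound the inner integral below
by `c ρ(x)^{-sp}`. Near a boundary point `z` the boundary is a Lipschitz graph, so `Ωᶜ ∩ B(z, r)`
contains a ball of radius `r / (L + 3)` lying under the graph; by compactness of `∂Ω` this gives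
`|Ωᶜ ∩ B(z, r)| ≥ c rᴺ` uniformly in `z`. For a nearest boundary point `z` of `x`, the points of
`Ωᶜ ∩ B(z, ρ(x))` are within `2ρ(x)` of `x`, which gives the bound
`≳ ρ(x)ᴺ / ρ(x)^{N + sp} = ρ(x)^{-sp}`.
-/

open Metric Module
open scoped NNReal

section MeasureDensity

variable {E : Type*} [MetricSpace E] [MeasurableSpace E] {μ : Measure E} {d : ℕ}

variable (μ d) in
def ComplMeasureDensity (Ω Z : Set E) (R c : ℝ) : Prop :=
  ∀ z ∈ Z, ∀ r, 0 < r → r ≤ R → ENNReal.ofReal (c * r ^ d) ≤ μ (Ωᶜ ∩ ball z r)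

namespace ComplMeasureDensity

variable {Ω Z : Set E} {R c : ℝ}

theorem mono {Z' : Set E} {R' c' : ℝ} (h : ComplMeasureDensity μ d Ω Z R c) (hZ : Z' ⊆ Z)
    (hR : R' ≤ R) (hc : c' ≤ c) : ComplMeasureDensity μ d Ω Z' R' c' :=
  fun z hz r hr hrR => (ENNReal.ofReal_le_ofReal (mul_le_mul_of_nonneg_right hc
    (pow_nonneg hr.le d))).trans (h z (hZ hz) r hr (hrR.trans hR))

theorem union {Z' : Set E} {R' c' : ℝ} (h : ComplMeasureDensity μ d Ω Z R c)
    (h' : ComplMeasureDensity μ d Ω Z' R' c') :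
    ComplMeasureDensity μ d Ω (Z ∪ Z') (min R R') (min c c') := by
  rintro z (hz | hz)
  · exact (h.mono subset_rfl (min_le_left _ _) (min_le_left _ _)) z hz
  · exact (h'.mono subset_rfl (min_le_right _ _) (min_le_right _ _)) z hz

theorem of_le_radius {R' : ℝ} (h : ComplMeasureDensity μ d Ω Z R c) (hR : 0 < R) (hc : 0 ≤ c)
    (hRR' : R ≤ R') : ComplMeasureDensity μ d Ω Z R' (c * (R / R') ^ d) := by
  intro z hz r hr hrR'
  have hR' : 0 < R' := hR.trans_le hRR'
  have hscale : R / R' * r ≤ min r R := le_min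
    (mul_le_of_le_one_left hr.le ((div_le_one hR').2 hRR'))
    (by calc R / R' * r ≤ R / R' * R' := by gcongr
      _ = R := div_mul_cancel₀ R hR'.ne')
  calc ENNReal.ofReal (c * (R / R') ^ d * r ^ d) ≤ ENNReal.ofReal (c * min r R ^ d) := by
        rw [mul_assoc, ← mul_pow]; gcongr
    _ ≤ μ (Ωᶜ ∩ ball z (min r R)) := h z hz _ (lt_min hr hR) (min_le_right _ _)
    _ ≤ μ (Ωᶜ ∩ ball z r) := by gcongr; exact min_le_left _ _

theorem le_lintegral_compl [OpensMeasurableSpace E] {x z : E} {t : ℝ}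
    (h : ComplMeasureDensity μ d Ω {z} R c) (hΩ : MeasurableSet Ω) (hx : x ∈ Ω)
    (hxz : 0 < dist x z) (hxzR : dist x z ≤ R) (hdt : 0 ≤ d + t) :
    ENNReal.ofReal (c / 2 ^ (d + t) / dist x z ^ t) ≤
      ∫⁻ y in Ωᶜ, ENNReal.ofReal (1 / dist x y ^ ((d : ℝ) + t)) ∂μ := by
  set ρ := dist x z
  set A := Ωᶜ ∩ ball z ρ
  have hA : MeasurableSet A := hΩ.compl.inter measurableSet_ball
  have hdist : ∀ y ∈ A, 0 < dist x y ∧ dist x y ≤ 2 * ρ := by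
    rintro y ⟨hyΩ, hyz⟩
    refine ⟨dist_pos.2 fun hxy => hyΩ (hxy ▸ hx), ?_⟩
    linarith [dist_triangle_right x y z, mem_ball.1 hyz]
  have hkernel : 1 / (2 * ρ) ^ ((d : ℝ) + t) * (c * ρ ^ d) = c / 2 ^ ((d : ℝ) + t) / ρ ^ t := by
    rw [Real.mul_rpow zero_le_two hxz.le, Real.rpow_add hxz, Real.rpow_natCast]
    field_simp
  calc ENNReal.ofReal (c / 2 ^ ((d : ℝ) + t) / ρ ^ t)
      = ENNReal.ofReal (1 / (2 * ρ) ^ ((d : ℝ) + t)) * ENNReal.ofReal (c * ρ ^ d) := by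
        rw [← ENNReal.ofReal_mul (by positivity), hkernel]
    _ ≤ ENNReal.ofReal (1 / (2 * ρ) ^ ((d : ℝ) + t)) * μ A := by
        gcongr; exact h z rfl ρ hxz hxzR
    _ = ∫⁻ _ in A, ENNReal.ofReal (1 / (2 * ρ) ^ ((d : ℝ) + t)) ∂μ := (setLIntegral_const _ _).symm
    _ ≤ ∫⁻ y in A, ENNReal.ofReal (1 / dist x y ^ ((d : ℝ) + t)) ∂μ := by
        refine setLIntegral_mono' hA fun y hy => ENNReal.ofReal_le_ofReal ?_
        obtain ⟨hpos, hle⟩ := hdist y hy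
        exact one_div_le_one_div_of_le (by positivity) (Real.rpow_le_rpow hpos.le hle hdt)
    _ ≤ ∫⁻ y in Ωᶜ, ENNReal.ofReal (1 / dist x y ^ ((d : ℝ) + t)) ∂μ :=
        lintegral_mono_set inter_subset_left

end ComplMeasureDensity

theorem IsCompact.exists_complMeasureDensity {Ω K : Set E} (hK : IsCompact K)
    (hloc : ∀ x ∈ K, ∃ V ∈ 𝓝[K] x, ∃ R > 0, ∃ c > 0, ComplMeasureDensity μ d Ω V R c) :
    ∃ R > 0, ∃ c > 0, ComplMeasureDensity μ d Ω K R c := by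
  refine hK.induction_on ?_ ?_ ?_ hloc
  · exact ⟨1, one_pos, 1, one_pos, fun z hz => absurd hz (notMem_empty z)⟩
  · rintro Z Z' hZ ⟨R, hR, c, hc, h⟩
    exact ⟨R, hR, c, hc, h.mono hZ le_rfl le_rfl⟩
  · rintro Z Z' ⟨R, hR, c, hc, h⟩ ⟨R', hR', c', hc', h'⟩
    exact ⟨_, lt_min hR hR', _, lt_min hc hc', h.union h'⟩

end MeasureDensity

theorem WithLp.ball_subset_subgraph_inter_ball {F : Type*} [SeminormedAddCommGroup F] {φ : F → ℝ}
    {L : ℝ≥0} (hφ : LipschitzWith L φ) {w : WithLp 2 (F × ℝ)} (hw : w.snd ≤ φ w.fst) {τ : ℝ}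
    (hτ : 0 ≤ τ) :
    ball (WithLp.toLp 2 (w.fst, w.snd - (L + 2) * τ)) τ ⊆
      {v | v.snd ≤ φ v.fst} ∩ ball w ((L + 3) * τ) := by
  set w' := WithLp.toLp 2 (w.fst, w.snd - (L + 2) * τ)
  have hw' : dist w' w = (L + 2) * τ := by
    rw [WithLp.prod_dist_eq_of_L2]
    simp [w', abs_of_nonneg, hτ, Real.sqrt_sq_eq_abs]
    exact Or.inl (by positivity)
  intro v hv
  rw [mem_ball] at hv
  have hfst : dist v.fst w.fst < τ := (WithLp.dist_fst_le v w').trans_lt hv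
  have hsnd : dist v.snd (w.snd - (L + 2) * τ) < τ := (WithLp.dist_snd_le v w').trans_lt hv
  have hφv : φ w.fst - L * τ ≤ φ v.fst := by
    have := (hφ.dist_le_mul v.fst w.fst).trans (mul_le_mul_of_nonneg_left hfst.le L.coe_nonneg)
    linarith [neg_abs_le (φ v.fst - φ w.fst), (Real.dist_eq (φ v.fst) (φ w.fst)) ▸ this]
  refine ⟨?_, ?_⟩
  · have := (abs_lt.1 ((Real.dist_eq _ _) ▸ hsnd)).2
    show v.snd ≤ φ v.fst
    linarith
  · rw [mem_ball]
    linarith [dist_triangle v w' w]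

theorem exists_complMeasureDensity_of_lipschitz_chart {E F : Type*} [NormedAddCommGroup E]
    [NormedSpace ℝ E] [MeasurableSpace E] [BorelSpace E] [FiniteDimensional ℝ E]
    [SeminormedAddCommGroup F] (μ : Measure E) [μ.IsAddHaarMeasure] {Ω U : Set E} {x : E}
    (hU : IsOpen U) (hxU : x ∈ U) (e : E ≃ᵢ WithLp 2 (F × ℝ)) {φ : F → ℝ} {L : ℝ≥0}
    (hφ : LipschitzWith L φ) (hchart : ∀ y ∈ U, (y ∈ Ω ↔ φ (e y).fst < (e y).snd)) :
    ∃ R > 0, ∃ c > 0, ComplMeasureDensity μ (finrank ℝ E) Ω (Ωᶜ ∩ ball x R) R c := by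
  obtain ⟨ε, hε, hεU⟩ := isOpen_iff.1 hU x hxU
  have hB : 0 < (μ (ball 0 1)).toReal :=
    ENNReal.toReal_pos (measure_ball_pos μ 0 one_pos).ne' measure_ball_lt_top.ne
  refine ⟨ε / 2, half_pos hε, (1 / (L + 3)) ^ finrank ℝ E * (μ (ball 0 1)).toReal,
    by positivity, ?_⟩
  rintro z ⟨hzΩ, hzx⟩ r hr hrR
  have hball : ball z r ⊆ U := fun y hy =>
    hεU (mem_ball.2 (by linarith [dist_triangle y z x, mem_ball.1 hy, mem_ball.1 hzx]))
  set τ := r / (L + 3)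
  have hτ : 0 < τ := by positivity
  have hr_eq : (L + 3) * τ = r := mul_div_cancel₀ r (by positivity)
  have hbelow : (e z).snd ≤ φ (e z).fst :=
    not_lt.1 fun h => hzΩ ((hchart z (hball (mem_ball_self hr))).2 h)
  have hsub : ball (e.symm (WithLp.toLp 2 ((e z).fst, (e z).snd - (L + 2) * τ))) τ ⊆
      Ωᶜ ∩ ball z r := by
    intro y hy
    rw [← e.preimage_ball] at hy
    obtain ⟨hy_below, hyz⟩ := WithLp.ball_subset_subgraph_inter_ball hφ hbelow hτ.le hy
    rw [hr_eq, ← mem_preimage, e.preimage_ball, e.symm_apply_apply] at hyz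
    exact ⟨fun hyΩ => not_lt.2 hy_below ((hchart y (hball hyz)).1 hyΩ), hyz⟩
  calc ENNReal.ofReal ((1 / (L + 3)) ^ finrank ℝ E * (μ (ball 0 1)).toReal * r ^ finrank ℝ E)
      = ENNReal.ofReal (τ ^ finrank ℝ E) * μ (ball 0 1) := by
        rw [show (1 / (L + 3)) ^ finrank ℝ E * (μ (ball 0 1)).toReal * r ^ finrank ℝ E =
            τ ^ finrank ℝ E * (μ (ball 0 1)).toReal by simp only [τ, div_pow]; ring,
          ENNReal.ofReal_mul (by positivity), ENNReal.ofReal_toReal measure_ball_lt_top.ne]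
    _ = μ (ball _ τ) := (Measure.addHaar_ball_of_pos μ _ hτ).symm
    _ ≤ μ (Ωᶜ ∩ ball z r) := measure_mono hsub

namespace IsLipschitzDomain

variable {N : ℕ} {Ω : Set (Euc N)}

theorem frontier_subset_compl (hΩ : IsLipschitzDomain Ω) : frontier Ω ⊆ Ωᶜ := fun _ hz =>
  (hΩ.1.frontier_eq ▸ hz).2

theorem exists_complMeasureDensity (hΩ : IsLipschitzDomain Ω) :
    ∃ R > 0, ∃ c > 0, ComplMeasureDensity volume N Ω (frontier Ω) R c := by
  have hK : IsCompact (frontier Ω) := isCompact_of_isClosed_isBounded isClosed_frontier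
    (hΩ.2.2.1.closure.subset frontier_subset_closure)
  refine hK.exists_complMeasureDensity fun x hx => ?_
  obtain ⟨U, hU, hxU, e, φ, L, hφ, hchart⟩ := hΩ.2.2.2 x hx
  obtain ⟨R, hR, c, hc, h⟩ :=
    exists_complMeasureDensity_of_lipschitz_chart volume hU hxU e hφ hchart
  rw [finrank_euclideanSpace_fin] at h
  exact ⟨frontier Ω ∩ ball x R, inter_mem_nhdsWithin _ (ball_mem_nhds x hR), R, hR, c, hc,
    h.mono (inter_subset_inter_left _ hΩ.frontier_subset_compl) le_rfl le_rfl⟩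

theorem exists_le_lintegral_compl (hΩ : IsLipschitzDomain Ω) {t : ℝ} (ht : 0 < t) :
    ∃ c > 0, ∀ x ∈ Ω, ENNReal.ofReal (c / rho Ω x ^ t) ≤
      ∫⁻ y in Ωᶜ, ENNReal.ofReal (1 / dist x y ^ ((N : ℝ) + t)) := by
  obtain ⟨R, hR, c, hc, h⟩ := hΩ.exists_complMeasureDensity
  have h' := h.of_le_radius hR hc.le (le_max_left R (diam Ω))
  refine ⟨c * (R / max R (diam Ω)) ^ N / 2 ^ ((N : ℝ) + t), by positivity, fun x hx => ?_⟩
  rcases (frontier Ω).eq_empty_or_nonempty with hempty | hne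
  · simp [rho, hempty, Real.zero_rpow ht.ne']
  obtain ⟨z, hz, hxz⟩ := isClosed_frontier.exists_infDist_eq_dist hne x
  have hρ : 0 < dist x z := dist_pos.2 fun hxz => hΩ.frontier_subset_compl hz (hxz ▸ hx)
  have hρR : dist x z ≤ max R (diam Ω) := by
    refine le_max_of_le_right ?_
    rw [← diam_closure]
    exact dist_le_diam_of_mem hΩ.2.2.1.closure (subset_closure hx) (frontier_subset_closure hz)
  rw [rho, hxz]
  exact (h'.mono (singleton_subset_iff.2 hz) le_rfl le_rfl).le_lintegral_compl hΩ.1.measurableSet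
    hx hρ hρR (by positivity)

end IsLipschitzDomain

theorem lintegral_mul_lintegral_compl_le_gagliardoE {N : ℕ} {s p : ℝ} {Ω : Set (Euc N)}
    (hΩ : MeasurableSet Ω) {u : Euc N → ℝ} (hu : ∀ᵐ x, x ∉ Ω → u x = 0) :
    ∫⁻ x in Ω, ENNReal.ofReal (|u x| ^ p) *
        ∫⁻ y in Ωᶜ, ENNReal.ofReal (1 / dist x y ^ ((N : ℝ) + s * p)) ≤
      gagliardoE N s p u := by
  have hcompl : ∀ x, ENNReal.ofReal (|u x| ^ p) *
      ∫⁻ y in Ωᶜ, ENNReal.ofReal (1 / dist x y ^ ((N : ℝ) + s * p)) =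
      ∫⁻ y in Ωᶜ, ENNReal.ofReal (|u x - u y| ^ p / dist x y ^ ((N : ℝ) + s * p)) := by
    intro x
    rw [← lintegral_const_mul' _ _ ENNReal.ofReal_ne_top]
    refine lintegral_congr_ae ?_
    filter_upwards [ae_restrict_of_ae hu, ae_restrict_mem hΩ.compl] with y hy hyΩ
    rw [hy hyΩ, sub_zero, ← ENNReal.ofReal_mul (by positivity), mul_one_div]
  simp_rw [hcompl]
  calc _ ≤ ∫⁻ x in Ω, ∫⁻ y, ENNReal.ofReal (|u x - u y| ^ p / dist x y ^ ((N : ℝ) + s * p)) :=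
        lintegral_mono fun x => setLIntegral_le_lintegral _ _
    _ ≤ gagliardoE N s p u := setLIntegral_le_lintegral _ _

theorem statement3_general {N : ℕ} {s p : ℝ} (hs0 : 0 < s)
    (hp : 1 < p) {Ω : Set (Euc N)} (hΩ : IsLipschitzDomain Ω) :
    ∃ C'' > 0, ∀ u : Euc N → ℝ, MemW0 N s p Ω u →
      ∫⁻ x in Ω, ENNReal.ofReal (|u x| ^ p / rho Ω x ^ (s * p))
        ≤ ENNReal.ofReal C'' * gagliardoE N s p u := by
  obtain ⟨c, hc, hkernel⟩ := hΩ.exists_le_lintegral_compl (mul_pos hs0 (zero_lt_one.trans hp))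
  refine ⟨c⁻¹, inv_pos.2 hc, fun u hu => ?_⟩
  calc ∫⁻ x in Ω, ENNReal.ofReal (|u x| ^ p / rho Ω x ^ (s * p))
      = ENNReal.ofReal c⁻¹ *
          ∫⁻ x in Ω, ENNReal.ofReal (|u x| ^ p) * ENNReal.ofReal (c / rho Ω x ^ (s * p)) := by
        rw [← lintegral_const_mul' _ _ ENNReal.ofReal_ne_top]
        refine lintegral_congr fun x => ?_
        rw [← ENNReal.ofReal_mul (by positivity), ← ENNReal.ofReal_mul (by positivity)]
        field_simp
    _ ≤ ENNReal.ofReal c⁻¹ * ∫⁻ x in Ω, ENNReal.ofReal (|u x| ^ p) *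
          ∫⁻ y in Ωᶜ, ENNReal.ofReal (1 / dist x y ^ ((N : ℝ) + s * p)) := by
        exact mul_le_mul_right
          (setLIntegral_mono' hΩ.1.measurableSet fun x hx => mul_le_mul_right (hkernel x hx) _) _
    _ ≤ ENNReal.ofReal c⁻¹ * gagliardoE N s p u := by
        gcongr
        exact lintegral_mul_lintegral_compl_le_gagliardoE hΩ.1.measurableSet hu.2.2

theorem statement3 {N : ℕ} (hN : 2 ≤ N) {s p : ℝ} (hs0 : 0 < s) (hs1 : s < 1)
    (hp : 1 < p) {Ω : Set (Euc N)} (hΩ : IsLipschitzDomain Ω) (hsp : s * p = 1) :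
    ∃ C'' > 0, ∀ u : Euc N → ℝ, MemW0 N s p Ω u →
      ∫⁻ x in Ω, ENNReal.ofReal (|u x| ^ p / rho Ω x ^ (s * p))
        ≤ ENNReal.ofReal C'' * gagliardoE N s p u :=
  statement3_general hs0 hp hΩ
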